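/- Any Toeplitz matrix B ∈ ℂ^{n×n} can be factorized as B = G D G*, where D is a 2n×2n diagonal matrix, G is the n×2n matrix with entries G_{j,k} = (1/(2n)) · exp(iπ(j+1)k/n) (indices j ∈ {0,…,n−1}, k ∈ {0,…,2n−1}), and G* is the conjugate transpose of G. -/

import Mathlib

/-!
With `N = 2n` and `e = ZMod.stdAddChar`, the matrix `G` is `G j q = e((j + 1) q) / N`, so
`(G D Gᴴ) j k = N⁻² ∑_q D q q · e((j - k) q)` depends only on `j - k` modulo `N`. Since the
differences `j - k` of indices in `Fin n` lie in `(-n, n)`, they stay distinct modulo `2n`, so the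
Toeplitz symbol `b` defines a function `f` on `ZMod (2n)` with `B j k = f (j - k)`. Fourier
inversion on `ZMod (2n)` then shows that `D = diag (N · 𝓕 f)` works.
-/

open Complex Matrix

namespace ZMod

open scoped ZMod

section

variable {N : ℕ} [NeZero N]

lemma sum_fin_natCast {M : Type*} [AddCommMonoid M] (g : ZMod N → M) :
    ∑ q : Fin N, g (q : ℕ) = ∑ x : ZMod N, g x := by
  refine Fintype.sum_bijective (fun q : Fin N => ((q : ℕ) : ZMod N)) ?_ _ _ fun _ => rfl
  refine (Fintype.bijective_iff_injective_and_card _).2 ⟨fun q r h => ?_, by simp⟩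
  have := congrArg ZMod.val h
  rwa [val_natCast_of_lt q.2, val_natCast_of_lt r.2, Fin.val_inj] at this

lemma sum_dft_mul_stdAddChar (f : ZMod N → ℂ) (x : ZMod N) :
    ∑ q, 𝓕 f q * stdAddChar (x * q) = N * f x := by
  have h := invDFT_apply (𝓕 f) x
  rw [LinearEquiv.symm_apply_apply, smul_eq_mul, eq_inv_mul_iff_mul_eq₀ (NeZero.ne _)] at h
  simp only [smul_eq_mul, mul_comm (stdAddChar _)] at h
  simp_rw [mul_comm x]
  exact h.symm

noncomputable def fourierMatrix {m : Type*} (ι : m → ZMod N) : Matrix m (Fin N) ℂ :=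
  of fun j q => (N : ℂ)⁻¹ * stdAddChar (ι j * ((q : ℕ) : ZMod N))

theorem of_sub_eq_fourierMatrix_mul_diagonal_mul_conjTranspose {m : Type*} (ι : m → ZMod N)
    (f : ZMod N → ℂ) :
    of (fun j k => f (ι j - ι k)) =
      fourierMatrix ι * diagonal (fun q : Fin N => N * 𝓕 f ((q : ℕ) : ZMod N)) *
        (fourierMatrix ι)ᴴ := by
  ext j k
  have hentry : ∀ q : Fin N,
      (fourierMatrix ι * diagonal (fun q : Fin N => N * 𝓕 f ((q : ℕ) : ZMod N))) j q *
        (fourierMatrix ι)ᴴ q k =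
      (N : ℂ)⁻¹ * (𝓕 f ((q : ℕ) : ZMod N) * stdAddChar ((ι j - ι k) * ((q : ℕ) : ZMod N))) := by
    intro q
    simp only [mul_diagonal, conjTranspose_apply, fourierMatrix, of_apply, star_mul', star_inv₀,
      star_natCast, sub_mul, AddChar.map_sub_eq_div]
    rw [← starRingEnd_apply, ← AddChar.inv_apply_eq_conj]
    field_simp
  rw [mul_apply, Finset.sum_congr rfl fun q _ => hentry q, ← Finset.mul_sum,
    sum_fin_natCast (fun x => 𝓕 f x * stdAddChar ((ι j - ι k) * x)), sum_dft_mul_stdAddChar,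
    of_apply, inv_mul_cancel_left₀ (NeZero.ne _)]

end

lemma stdAddChar_natCast_two_mul (n : ℕ) [NeZero n] (m : ℕ) :
    stdAddChar (m : ZMod (2 * n)) = exp (Real.pi * I * m / n) := by
  rw [← Int.cast_natCast, stdAddChar_coe]
  congr 1
  push_cast
  field_simp [NeZero.ne (n : ℂ)]

lemma valMinAbs_natCast_sub_natCast {n j k : ℕ} [NeZero n] (hj : j < n) (hk : k < n) :
    ((j : ZMod (2 * n)) - k).valMinAbs = (j : ℤ) - k := by
  rw [valMinAbs_spec]
  push_cast
  exact ⟨by simp, by omega, by omega⟩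

end ZMod

/-- Any Toeplitz matrix `B ∈ ℂ^{n×n}` factorizes as `B = G D G*` with `D` a `2n×2n` diagonal
matrix and `G` the `n×2n` Vandermonde matrix `G j k = (1/(2n)) exp(iπ(j+1)k/n)`. -/
theorem toeplitz_factorization (n : ℕ) (B : Matrix (Fin n) (Fin n) ℂ)
    (hB : ∃ b : ℤ → ℂ, ∀ j k : Fin n, B j k = b ((k : ℕ) - (j : ℕ) : ℤ)) :
    ∃ D : Matrix (Fin (2 * n)) (Fin (2 * n)) ℂ, D.IsDiag ∧
      B = (Matrix.of fun (j : Fin n) (k : Fin (2 * n)) =>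
            (1 / (2 * n) : ℂ) *
              Complex.exp (Real.pi * Complex.I * ((j : ℕ) + 1) * (k : ℕ) / n)) * D *
          (Matrix.of fun (j : Fin n) (k : Fin (2 * n)) =>
            (1 / (2 * n) : ℂ) *
              Complex.exp (Real.pi * Complex.I * ((j : ℕ) + 1) * (k : ℕ) / n))ᴴ := by
  obtain ⟨b, hb⟩ := hB
  rcases eq_zero_or_neZero n with rfl | _
  · exact ⟨0, isDiag_zero, by ext j; exact j.elim0⟩
  let ι : Fin n → ZMod (2 * n) := fun j => (j : ℕ) + 1
  let f : ZMod (2 * n) → ℂ := fun x => b (-x.valMinAbs)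
  have hG : (Matrix.of fun (j : Fin n) (k : Fin (2 * n)) =>
      (1 / (2 * n) : ℂ) * Complex.exp (Real.pi * Complex.I * ((j : ℕ) + 1) * (k : ℕ) / n)) =
      ZMod.fourierMatrix ι := by
    ext j k
    have hprod : ι j * ((k : ℕ) : ZMod (2 * n)) = (((j + 1) * k : ℕ) : ZMod (2 * n)) := by
      push_cast [ι]; ring
    rw [ZMod.fourierMatrix, of_apply, of_apply, hprod, ZMod.stdAddChar_natCast_two_mul]
    push_cast
    ring_nf
  have hToeplitz : B = of fun j k => f (ι j - ι k) := by
    ext j k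
    have hsub : ι j - ι k = ((j : ℕ) : ZMod (2 * n)) - (k : ℕ) := by
      simp only [ι]; ring
    rw [hb, of_apply, hsub]
    simp only [f, ZMod.valMinAbs_natCast_sub_natCast j.2 k.2, neg_sub]
  rw [hG, hToeplitz, ZMod.of_sub_eq_fourierMatrix_mul_diagonal_mul_conjTranspose]
  exact ⟨_, isDiag_diagonal _, rfl⟩
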